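/- Let H be a bialgebra over a field k with coproduct Δ, counit ε, and unit η. If x ∈ H is a product of n primitive elements (n ≥ 0, with the empty product being 1), then for every m > n one has ((id_H − η∘ε)^{⊗m} ∘ Δ^{(m)})(x) = 0, where Δ^{(m)} : H → H^{⊗m} is the (m−1)-fold iterated coproduct. -/

import Mathlib

open TensorProduct

section Defs
variable (k H : Type*) [Field k] [Ring H] [Bialgebra k H]

/-- `Tp n` is the `(n+1)`-fold tensor power `H ⊗ (H ⊗ (⋯ ⊗ H))`. -/
noncomputable def Tp : ℕ → ModuleCat k
  | 0 => ModuleCat.of k H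
  | n + 1 => ModuleCat.of k (H ⊗[k] (Tp n))

/-- `Δ ⊗ id^{⊗ n} : H^{⊗(n+1)} → H^{⊗(n+2)}`, the coproduct applied to the first factor. -/
noncomputable def copFirst : (n : ℕ) → (Tp k H n →ₗ[k] Tp k H (n + 1))
  | 0 => (Coalgebra.comul : H →ₗ[k] H ⊗[k] H)
  | n + 1 =>
      (TensorProduct.assoc k H H (Tp k H n)).toLinearMap ∘ₗ
        TensorProduct.map (Coalgebra.comul : H →ₗ[k] H ⊗[k] H) LinearMap.id

/-- the iterated coproduct `Δ^{(n+1)} : H → H^{⊗(n+1)}`, with `Δ^{(1)} = id` and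
`Δ^{(m)} = (Δ ⊗ id^{⊗(m−2)}) ∘ Δ^{(m−1)}`. -/
noncomputable def itCop : (n : ℕ) → (ModuleCat.of k H →ₗ[k] Tp k H n)
  | 0 => LinearMap.id
  | n + 1 => copFirst k H n ∘ₗ itCop n

/-- the factorwise map `f^{⊗(n+1)} : H^{⊗(n+1)} → H^{⊗(n+1)}` for `f : H → H`. -/
noncomputable def itMap (f : H →ₗ[k] H) : (n : ℕ) → (Tp k H n →ₗ[k] Tp k H n)
  | 0 => f
  | n + 1 => TensorProduct.map f (itMap f n)

/-- primitive elements: `Δ(x) = x ⊗ 1 + 1 ⊗ x` -/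
noncomputable def IsPrim (x : H) : Prop :=
  (Coalgebra.comul (R := k) x) = x ⊗ₜ[k] (1 : H) + (1 : H) ⊗ₜ[k] x

/-- `id_H − η∘ε : H → H` -/
noncomputable def idSubUnitCounit : H →ₗ[k] H :=
  (LinearMap.id : H →ₗ[k] H) - (Algebra.linearMap k H) ∘ₗ (Coalgebra.counit : H →ₗ[k] k)

end Defs

/-!
Induct on `m`. By coassociativity `Δ^{(m+1)} = (id ⊗ Δ^{(m)}) ∘ Δ`, and since `Δ` is
multiplicative, `Δ(y₁ ⋯ yₙ)` for primitive `yᵢ` is the sum, over all ways of splitting the word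
`y₁ ⋯ yₙ` into two complementary subwords, of (first subword) ⊗ (second subword). A term whose
first subword is empty has first factor `1`, which `id − η∘ε` kills; in every other term the
second factor is a product of at most `n − 1` primitives, so the induction hypothesis for `m − 1`
kills it.
-/

def List.splittings {α : Type*} : List α → List (List α × List α)
  | [] => [([], [])]
  | y :: l => (splittings l).map (fun p => (y :: p.1, p.2)) ++
      (splittings l).map (fun p => (p.1, y :: p.2))

theorem List.sublist_of_mem_splittings {α : Type*} {l : List α} {p : List α × List α}
    (hp : p ∈ l.splittings) :
    p.1.Sublist l ∧ p.2.Sublist l ∧ p.1.length + p.2.length = l.length := by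
  induction l generalizing p with
  | nil =>
    obtain rfl : p = ([], []) := List.mem_singleton.mp hp
    simp
  | cons y l ih =>
    simp only [List.splittings, List.mem_append, List.mem_map] at hp
    rcases hp with ⟨q, hq, rfl⟩ | ⟨q, hq, rfl⟩ <;> obtain ⟨h₁, h₂, hlen⟩ := ih hq
    · exact ⟨h₁.cons_cons y, h₂.cons y, by simp only [List.length_cons]; omega⟩
    · exact ⟨h₁.cons y, h₂.cons_cons y, by simp only [List.length_cons]; omega⟩

theorem assoc_map_comul_map_comul {R C M : Type*} [CommSemiring R] [AddCommMonoid C]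
    [Module R C] [Coalgebra R C] [AddCommMonoid M] [Module R M] (g : C →ₗ[R] M) (x : C) :
    TensorProduct.assoc R C C M
        (map Coalgebra.comul LinearMap.id (map LinearMap.id g (Coalgebra.comul x))) =
      map LinearMap.id (map LinearMap.id g ∘ₗ Coalgebra.comul) (Coalgebra.comul x) := by
  have hswap : map Coalgebra.comul LinearMap.id (map LinearMap.id g (Coalgebra.comul x)) =
      map (map LinearMap.id LinearMap.id) g
        (Coalgebra.comul.rTensor C (Coalgebra.comul (R := R) x)) := by
    rw [LinearMap.rTensor, ← LinearMap.comp_apply, ← LinearMap.comp_apply (map _ g), ← map_comp,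
      ← map_comp, map_id]
    simp only [LinearMap.id_comp, LinearMap.comp_id]
  rw [hswap, ← map_map_assoc, Coalgebra.coassoc_apply, LinearMap.lTensor, ← LinearMap.comp_apply,
    ← map_comp, LinearMap.id_comp]

section Bialgebra

variable {k H : Type*} [Field k] [Ring H] [Bialgebra k H]

theorem comul_list_prod_of_isPrim {l : List H} (hl : ∀ y ∈ l, IsPrim k H y) :
    Coalgebra.comul (R := k) l.prod = (l.splittings.map fun p => p.1.prod ⊗ₜ[k] p.2.prod).sum := by
  induction l with
  | nil => simp [List.splittings, Algebra.TensorProduct.one_def]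
  | cons y l ih =>
    rw [List.forall_mem_cons] at hl
    rw [List.prod_cons, Bialgebra.comul_mul, hl.1, ih hl.2, ← List.sum_map_mul_left]
    simp [List.splittings, add_mul, List.sum_map_add, Function.comp_def]

/-- Coassociativity lets the iterated coproduct be unfolded from the left:
`Δ^{(n+2)} = (id ⊗ Δ^{(n+1)}) ∘ Δ`. -/
theorem itCop_succ_apply (n : ℕ) (x : H) :
    (itCop k H (n + 1) x : H ⊗[k] Tp k H n) =
      map LinearMap.id (itCop k H n) (Coalgebra.comul x) := by
  induction n generalizing x with
  | zero => exact (congrFun (congrArg DFunLike.coe TensorProduct.map_id) _).symm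
  | succ n ih =>
    change TensorProduct.assoc k H H (Tp k H n)
      (map Coalgebra.comul LinearMap.id (itCop k H (n + 1) x)) = _
    rw [ih]
    refine (assoc_map_comul_map_comul (itCop k H n) x).trans ?_
    congr 2
    exact LinearMap.ext fun y => (ih y).symm

theorem itMap_itCop_succ_apply (f : H →ₗ[k] H) (n : ℕ) (x : H) :
    itMap k H f (n + 1) (itCop k H (n + 1) x) =
      map f (itMap k H f n ∘ₗ itCop k H n) (Coalgebra.comul x) := by
  change map f (itMap k H f n) (itCop k H (n + 1) x) = _
  rw [itCop_succ_apply, ← LinearMap.comp_apply, ← map_comp, LinearMap.comp_id]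

theorem idSubUnitCounit_one : idSubUnitCounit k H 1 = 0 := by
  simp [idSubUnitCounit]

end Bialgebra

/-- Let `H` be a bialgebra over a field. If `x ∈ H` is a product of `n`
primitive elements, then for every `m > n` (here `m = n' + 1 ≥ 1`, so `H^{⊗m} = Tp (m-1)`),
`((id_H − η∘ε)^{⊗m} ∘ Δ^{(m)})(x) = 0`. -/
theorem product_of_primitives_vanishing
    {k H : Type*} [Field k] [Ring H] [Bialgebra k H]
    (l : List H) (hl : ∀ y ∈ l, IsPrim k H y) (x : H) (hx : x = l.prod)
    (n : ℕ) (hn : l.length < n + 1) :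
    itMap k H (idSubUnitCounit k H) n (itCop k H n x) = 0 := by
  subst hx
  induction n generalizing l with
  | zero =>
    obtain rfl : l = [] := List.eq_nil_of_length_eq_zero (by omega)
    exact idSubUnitCounit_one (k := k) (H := H)
  | succ n ih =>
    show (_ : H ⊗[k] Tp k H n) = 0
    rw [itMap_itCop_succ_apply, comul_list_prod_of_isPrim hl, map_list_sum, List.map_map]
    refine List.sum_eq_zero fun t ht => ?_
    obtain ⟨p, hp, rfl⟩ := List.mem_map.mp ht
    obtain ⟨-, h₂, hlen⟩ := List.sublist_of_mem_splittings hp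
    simp only [Function.comp_apply, map_tmul]
    by_cases h₁ : p.1 = []
    · rw [h₁, List.prod_nil, idSubUnitCounit_one, zero_tmul]
    · have hpos := List.length_pos_iff.mpr h₁
      rw [LinearMap.comp_apply, ih p.2 (fun y hy => hl y (h₂.subset hy)) (by omega), tmul_zero]
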